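/- Let X be a smooth vector field on a manifold M, ω a smooth p-form with L_X ω = 0, Y a symmetry of X, and S₁,…,S_{p−1} vector fields each of which is a Y-pseudosymmetry of X (i.e. L_X S_i = f_i · Y for smooth functions f_i). Then Φ = ω(S₁,…,S_{p−1}, Y) satisfies L_X Φ = 0, i.e. Φ is a conservation law for X. -/

import Mathlib

/- STATEMENT 4: If L_X ω = 0 for a p-form ω (p = n+1), Y is a symmetry of X and
S₁,…,S_{p-1} are Y-pseudosymmetries of X ([X,Sᵢ] = fᵢ·Y), then
Φ = ω(S₁,…,S_{p-1},Y) is a conservation law for X. -/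

noncomputable section

variable {E : Type*} [NormedAddCommGroup E] [NormedSpace ℝ E]

/-- Lie bracket of vector fields: `[X,Y] = DY·X - DX·Y`. -/
def vfBracket (X Y : E → E) : E → E :=
  fun x => fderiv ℝ Y x (X x) - fderiv ℝ X x (Y x)

/-- Action of a vector field on a function. -/
def vfDeriv (X : E → E) (f : E → ℝ) : E → ℝ :=
  fun x => fderiv ℝ f x (X x)

/-- Lie derivative of a p-form (given as a continuous multilinear map field)
along a vector field, evaluated at `x` on the vectors `v`. -/
def lieDerivP {p : ℕ} (X : E → E)
    (ω : E → ContinuousMultilinearMap ℝ (fun _ : Fin p => E) ℝ)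
    (x : E) (v : Fin p → E) : ℝ :=
  fderiv ℝ ω x (X x) v + ∑ i, ω x (Function.update v i (fderiv ℝ X x (v i)))

theorem conservation_law_from_symmetry_and_pseudosymmetries_p_form
    (n : ℕ) (X Y : E → E) (S : Fin n → E → E) (f : Fin n → E → ℝ)
    (ω : E → ContinuousMultilinearMap ℝ (fun _ : Fin (n + 1) => E) ℝ)
    (hX : ContDiff ℝ (⊤ : ℕ∞) X) (hY : ContDiff ℝ (⊤ : ℕ∞) Y)
    (hS : ∀ i, ContDiff ℝ (⊤ : ℕ∞) (S i)) (hf : ∀ i, ContDiff ℝ (⊤ : ℕ∞) (f i))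
    (hω : ContDiff ℝ (⊤ : ℕ∞) ω)
    (halt : ∀ (x : E) (v : Fin (n + 1) → E) (i j : Fin (n + 1)),
      i ≠ j → v i = v j → ω x v = 0)
    (hLω : ∀ x v, lieDerivP X ω x v = 0)
    (hsymY : vfBracket X Y = 0)
    (hpseudoS : ∀ i x, vfBracket X (S i) x = f i x • Y x) :
    vfDeriv X (fun x => ω x (Fin.snoc (fun i => S i x) (Y x))) = 0 := by

  classical
  funext x
  -- The family of vector fields `S₀, …, S_{n-1}, Y`.
  set W : Fin (n + 1) → E → E := Fin.snoc (fun i => S i) Y with hW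
  have hWcast : ∀ i : Fin n, W i.castSucc = S i := fun i => by simp [hW]
  have hWlast : W (Fin.last n) = Y := by simp [hW]
  have hWsm : ∀ i, ContDiff ℝ (⊤ : ℕ∞) (W i) := by
    intro i
    induction i using Fin.lastCases with
    | last => rw [hWlast]; exact hY
    | cast i => rw [hWcast]; exact hS i
  -- value of the family at `x`
  set v : Fin (n + 1) → E := fun i => W i x with hv
  have hvfun : ∀ y : E, (Fin.snoc (fun i => S i y) (Y y) : Fin (n + 1) → E)
      = fun i => W i y := by
    intro y
    funext i
    induction i using Fin.lastCases with
    | last => simp [hWlast]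
    | cast i => simp [hWcast i]
  -- derivative data
  have hωd : HasFDerivAt ω (fderiv ℝ ω x) x :=
    ((hω.differentiable (by simp)) x).hasFDerivAt
  have hWd : ∀ i, HasFDerivAt (W i) (fderiv ℝ (W i) x) x :=
    fun i => (((hWsm i).differentiable (by simp)) x).hasFDerivAt
  -- chain rule for `y ↦ ω y (W · y)`
  have H := HasFDerivAt.linear_multilinear_comp hωd hWd
    (ContinuousLinearMap.id ℝ (ContinuousMultilinearMap ℝ (fun _ : Fin (n + 1) => E) ℝ))
  have hfeq : (fun y => ω y (Fin.snoc (fun i => S i y) (Y y) : Fin (n + 1) → E))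
      = fun y => (ContinuousLinearMap.id ℝ
          (ContinuousMultilinearMap ℝ (fun _ : Fin (n + 1) => E) ℝ)) (ω y)
          (fun i => W i y) := by
    funext y
    rw [hvfun y]
    rfl
  have hD : vfDeriv X (fun y => ω y (Fin.snoc (fun i => S i y) (Y y))) x
      = fderiv ℝ ω x (X x) v
        + ∑ i, ω x (Function.update v i (fderiv ℝ (W i) x (X x))) := by
    show fderiv ℝ (fun y => ω y (Fin.snoc (fun i => S i y) (Y y))) x (X x) = _
    rw [hfeq, H.fderiv]
    simp [hv]
  -- use the Lie derivative hypothesis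
  have hL := hLω x v
  unfold lieDerivP at hL
  have hωX : fderiv ℝ ω x (X x) v
      = -∑ i, ω x (Function.update v i (fderiv ℝ X x (v i))) := by
    linarith [hL]
  have key : vfDeriv X (fun y => ω y (Fin.snoc (fun i => S i y) (Y y))) x
      = ∑ i, ω x (Function.update v i (vfBracket X (W i) x)) := by
    rw [hD, hωX, neg_add_eq_sub, ← Finset.sum_sub_distrib]
    refine Finset.sum_congr rfl fun i _ => ?_
    rw [show vfBracket X (W i) x = fderiv ℝ (W i) x (X x) - fderiv ℝ X x (v i) from rfl,
      (ω x).map_update_sub]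
  rw [show (0 : E → ℝ) x = 0 from rfl, key, Fin.sum_univ_castSucc]
  have hlastv : v (Fin.last n) = Y x := by
    show W (Fin.last n) x = Y x
    rw [hWlast]
  have hterm0 : ω x (Function.update v (Fin.last n) (vfBracket X (W (Fin.last n)) x)) = 0 := by
    rw [hWlast, hsymY]
    simp only [Pi.zero_apply]
    exact (ω x).map_update_zero v (Fin.last n)
  have hterms : ∀ i : Fin n,
      ω x (Function.update v i.castSucc (vfBracket X (W i.castSucc) x)) = 0 := by
    intro i
    rw [hWcast, hpseudoS i x, (ω x).map_update_smul]
    have hne : i.castSucc ≠ Fin.last n := (Fin.castSucc_lt_last i).ne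
    have : ω x (Function.update v i.castSucc (Y x)) = 0 := by
      refine halt x _ i.castSucc (Fin.last n) hne ?_
      rw [Function.update_self, Function.update_of_ne hne.symm, hlastv]
    rw [this, smul_zero]
  rw [hterm0, Finset.sum_congr rfl (fun i _ => hterms i), Finset.sum_const_zero, add_zero]
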